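/- arXiv:2202.00586 — 4 statements merged into one kernel-verified Lean document; each statement's English description precedes it below -/
import Mathlib

section
/- For all real x ≥ 0 and all positive integers n, the ratio h_{n/2}(x) = I_{n/2}(x)/I_{n/2-1}(x) of modified Bessel functions of the first kind satisfies 0 ≤ h_{n/2}(x) ≤ x/n. -/
/-- Modified Bessel function of the first kind of order `ν`. -/
noncomputable def besselI (ν x : ℝ) : ℝ :=
  ∑' k : ℕ, (x / 2) ^ (2 * (k : ℝ) + ν) / (k.factorial * Real.Gamma ((k : ℝ) + ν + 1))

/-- Ratio `h_ν(x) = I_ν(x) / I_{ν-1}(x)`. -/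
noncomputable def besselRatio (ν x : ℝ) : ℝ := besselI ν x / besselI (ν - 1) x

/-!
Every term of the series for `I_ν` is a nonnegative multiple of the corresponding term of the
series for `I_{ν-1}`: since `Γ(k + ν + 1) = (k + ν) Γ(k + ν)`, the `k`-th term of `I_ν(x)` is
`x / (2 (k + ν))` times the `k`-th term of `I_{ν-1}(x)`, and `x / (2 (k + ν)) ≤ x / (2 ν)`.
Summing gives `0 ≤ I_ν(x) ≤ x / (2 ν) · I_{ν-1}(x)`, which is the claim for `ν = n / 2`
(where `I_{ν-1}(x)` vanishes, e.g. at `x = 0` for `ν ≠ 1`, the ratio is `0` since `a / 0 = 0`).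
Summability of the series comes from comparing consecutive terms with the exponential series.
-/

open Real

noncomputable def besselITerm (ν x : ℝ) (k : ℕ) : ℝ :=
  (x / 2) ^ (2 * (k : ℝ) + ν) / (k.factorial * Gamma ((k : ℝ) + ν + 1))

theorem besselI_eq_tsum (ν x : ℝ) : besselI ν x = ∑' k, besselITerm ν x k := rfl

section

variable {ν x : ℝ}

theorem besselITerm_nonneg (hν : -1 < ν) (hx : 0 ≤ x) (k : ℕ) : 0 ≤ besselITerm ν x k := by
  have : 0 < Gamma ((k : ℝ) + ν + 1) :=
    Gamma_pos_of_pos (by linarith [k.cast_nonneg (α := ℝ)])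
  unfold besselITerm
  positivity

theorem besselITerm_succ (hν : -1 < ν) (hx : 0 ≤ x) (k : ℕ) :
    besselITerm ν x (k + 1) = (x / 2) ^ 2 / ((k + 1) * (k + 1 + ν)) * besselITerm ν x k := by
  have hk : (0 : ℝ) < k + 1 + ν := by linarith [k.cast_nonneg (α := ℝ)]
  have hpow : (x / 2) ^ (2 * ((k + 1 : ℕ) : ℝ) + ν) =
      (x / 2) ^ (2 * (k : ℝ) + ν) * (x / 2) ^ 2 := by
    rw [← rpow_natCast _ 2, ← rpow_add' (by positivity) (by push_cast; linarith)]
    push_cast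
    ring_nf
  have hGamma :
      Gamma (((k + 1 : ℕ) : ℝ) + ν + 1) = (k + 1 + ν) * Gamma ((k : ℝ) + ν + 1) := by
    rw [show ((k + 1 : ℕ) : ℝ) + ν + 1 = (k + ν + 1) + 1 by push_cast; ring,
      Gamma_add_one (by linarith)]
    ring
  have : 0 < Gamma ((k : ℝ) + ν + 1) := Gamma_pos_of_pos (by linarith)
  unfold besselITerm
  rw [hpow, hGamma, Nat.factorial_succ]
  push_cast
  field_simp

theorem besselITerm_le (hν : -1 < ν) (hx : 0 ≤ x) (k : ℕ) :
    besselITerm ν x k ≤ besselITerm ν x 0 * ((x / 2) ^ 2 / (ν + 1)) ^ k / k.factorial := by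
  induction k with
  | zero => simp
  | succ k ih =>
    have hν1 : 0 < ν + 1 := by linarith
    have hratio : (x / 2) ^ 2 / ((k + 1) * (k + 1 + ν)) ≤ (x / 2) ^ 2 / (ν + 1) / (k + 1) := by
      rw [div_div]
      exact div_le_div_of_nonneg_left (sq_nonneg _) (by positivity)
        (by nlinarith [k.cast_nonneg (α := ℝ)])
    calc besselITerm ν x (k + 1)
        = (x / 2) ^ 2 / ((k + 1) * (k + 1 + ν)) * besselITerm ν x k := besselITerm_succ hν hx k
      _ ≤ (x / 2) ^ 2 / (ν + 1) / (k + 1) *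
            (besselITerm ν x 0 * ((x / 2) ^ 2 / (ν + 1)) ^ k / k.factorial) := by
          gcongr
          exact besselITerm_nonneg hν hx k
      _ = besselITerm ν x 0 * ((x / 2) ^ 2 / (ν + 1)) ^ (k + 1) / (k + 1).factorial := by
          generalize (x / 2) ^ 2 = a
          rw [Nat.factorial_succ, Nat.cast_mul, Nat.cast_succ, pow_succ]
          field_simp

theorem summable_besselITerm (hν : -1 < ν) (hx : 0 ≤ x) : Summable (besselITerm ν x) := by
  refine .of_nonneg_of_le (besselITerm_nonneg hν hx) (besselITerm_le hν hx) ?_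
  simpa only [mul_div_assoc] using
    (summable_pow_div_factorial ((x / 2) ^ 2 / (ν + 1))).mul_left (besselITerm ν x 0)

theorem besselITerm_eq_mul_besselITerm_sub_one (hν : 0 < ν) (hx : 0 ≤ x) (k : ℕ) :
    besselITerm ν x k = x / (2 * (k + ν)) * besselITerm (ν - 1) x k := by
  have hpow : (x / 2) ^ (2 * (k : ℝ) + ν) = (x / 2) ^ (2 * (k : ℝ) + (ν - 1)) * (x / 2) := by
    have hk : 2 * (k : ℝ) + (ν - 1) + 1 ≠ 0 := by linarith [k.cast_nonneg (α := ℝ)]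
    rw [show 2 * (k : ℝ) + ν = 2 * k + (ν - 1) + 1 by ring, rpow_add' (by positivity) hk,
      rpow_one]
  have hGamma : Gamma ((k : ℝ) + ν + 1) = (k + ν) * Gamma ((k : ℝ) + (ν - 1) + 1) := by
    rw [Gamma_add_one (by positivity)]
    ring_nf
  have : 0 < Gamma ((k : ℝ) + (ν - 1) + 1) :=
    Gamma_pos_of_pos (by linarith [k.cast_nonneg (α := ℝ)])
  unfold besselITerm
  rw [hpow, hGamma]
  field_simp

theorem besselI_nonneg (hν : -1 < ν) (hx : 0 ≤ x) : 0 ≤ besselI ν x :=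
  tsum_nonneg (besselITerm_nonneg hν hx)

theorem besselI_le_div_mul_besselI_sub_one (hν : 0 < ν) (hx : 0 ≤ x) :
    besselI ν x ≤ x / (2 * ν) * besselI (ν - 1) x := by
  have hν' : -1 < ν - 1 := by linarith
  have htermwise (k : ℕ) : besselITerm ν x k ≤ x / (2 * ν) * besselITerm (ν - 1) x k := by
    rw [besselITerm_eq_mul_besselITerm_sub_one hν hx k]
    gcongr
    · exact besselITerm_nonneg hν' hx k
    · exact le_add_of_nonneg_left k.cast_nonneg
  rw [besselI_eq_tsum, besselI_eq_tsum, ← tsum_mul_left]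
  exact (summable_besselITerm (by linarith) hx).tsum_le_tsum htermwise
    ((summable_besselITerm hν' hx).mul_left _)

theorem besselRatio_nonneg (hν : 0 < ν) (hx : 0 ≤ x) : 0 ≤ besselRatio ν x :=
  div_nonneg (besselI_nonneg (by linarith) hx) (besselI_nonneg (by linarith) hx)

theorem besselRatio_le_div (hν : 0 < ν) (hx : 0 ≤ x) : besselRatio ν x ≤ x / (2 * ν) :=
  div_le_of_le_mul₀ (besselI_nonneg (by linarith) hx) (by positivity)
    (besselI_le_div_mul_besselI_sub_one hν hx)

end

theorem besselRatio_nonneg_and_le_div (x : ℝ) (hx : 0 ≤ x) (n : ℕ) (hn : 0 < n) :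
    0 ≤ besselRatio ((n : ℝ) / 2) x ∧ besselRatio ((n : ℝ) / 2) x ≤ x / n := by
  have hν : 0 < (n : ℝ) / 2 := by positivity
  have hle := besselRatio_le_div hν hx
  rw [mul_div_cancel₀ (n : ℝ) two_ne_zero] at hle
  exact ⟨besselRatio_nonneg hν hx, hle⟩
end

section
/- For all real x ≥ 0 and all positive integers n, the ratio h_{n/2}(x) = I_{n/2}(x)/I_{n/2-1}(x) of modified Bessel functions satisfies h_{n/2}(x) ≤ 1. -/
open Real Filter

noncomputable def besselCoeff (μ y : ℝ) (k : ℕ) : ℝ :=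
  y ^ k / (k.factorial * Gamma ((k : ℝ) + μ))

section BesselCoeff

variable {μ y : ℝ}

lemma besselCoeff_nonneg (hμ : 0 < μ) (hy : 0 ≤ y) (k : ℕ) : 0 ≤ besselCoeff μ y k := by
  have := Gamma_pos_of_pos (by positivity : (0 : ℝ) < k + μ)
  unfold besselCoeff
  positivity

lemma besselCoeff_add_one {k : ℕ} (hk : (k : ℝ) + μ ≠ 0) :
    besselCoeff (μ + 1) y k = besselCoeff μ y k / (k + μ) := by
  unfold besselCoeff
  rw [← add_assoc, Gamma_add_one hk, div_div]
  congr 1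
  ring

lemma besselCoeff_succ {k : ℕ} (hk : (k : ℝ) + μ ≠ 0) :
    besselCoeff μ y (k + 1) = y / ((k + 1) * (k + μ)) * besselCoeff μ y k := by
  unfold besselCoeff
  rw [Nat.cast_succ, add_right_comm, Gamma_add_one hk, Nat.factorial_succ]
  push_cast
  field_simp
  ring

lemma summable_besselCoeff (μ y : ℝ) : Summable (besselCoeff μ y) := by
  refine summable_of_ratio_norm_eventually_le (r := 1 / 2) (by norm_num) ?_
  filter_upwards [eventually_ge_atTop (⌈2 * |y| + |μ|⌉₊ + 1)] with k hk
  have hkμ : 2 * |y| + 1 ≤ k + μ := by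
    have : (⌈2 * |y| + |μ|⌉₊ : ℝ) + 1 ≤ k := by exact_mod_cast hk
    linarith [Nat.le_ceil (2 * |y| + |μ|), neg_abs_le μ]
  have hpos : 0 < ((k : ℝ) + 1) * (k + μ) := mul_pos (by positivity) (by linarith [abs_nonneg y])
  rw [besselCoeff_succ (by linarith [abs_nonneg y]), norm_mul, norm_div, Real.norm_eq_abs,
    Real.norm_of_nonneg hpos.le]
  refine mul_le_mul_of_nonneg_right ?_ (norm_nonneg _)
  rw [div_le_iff₀ hpos]
  nlinarith [abs_nonneg y, (Nat.cast_nonneg k : (0 : ℝ) ≤ k)]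

end BesselCoeff

lemma besselI_eq_rpow_mul_tsum (ν : ℝ) {x : ℝ} (hx : 0 < x) :
    besselI ν x = (x / 2) ^ ν * ∑' k, besselCoeff (ν + 1) ((x / 2) ^ 2) k := by
  rw [← tsum_mul_left]
  refine tsum_congr fun k => ?_
  rw [besselCoeff, ← add_assoc, ← rpow_natCast, ← rpow_natCast, ← rpow_mul (by positivity),
    mul_div_assoc', ← rpow_add (by positivity)]
  push_cast
  ring_nf

lemma besselI_zero_right {ν : ℝ} (hν : 0 < ν) : besselI ν 0 = 0 := by
  refine (tsum_congr fun k => ?_).trans tsum_zero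
  rw [zero_div, zero_rpow (by positivity), zero_div]

lemma besselRatio_eq {ν x : ℝ} (hx : 0 < x) :
    besselRatio ν x =
      x / 2 * (∑' k, besselCoeff (ν + 1) ((x / 2) ^ 2) k) /
        ∑' k, besselCoeff ν ((x / 2) ^ 2) k := by
  have ht : (0 : ℝ) < x / 2 := by positivity
  rw [besselRatio, besselI_eq_rpow_mul_tsum ν hx, besselI_eq_rpow_mul_tsum _ hx, sub_add_cancel,
    rpow_sub_one ht.ne']
  have := (rpow_pos_of_pos ht ν).ne'
  field_simp

lemma tsum_le_tsum_of_le_midpoint_succ {a b : ℕ → ℝ} (hb : Summable b) (hb₀ : 0 ≤ b 0)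
    (ha : ∀ k, 0 ≤ a k) (hab : ∀ k, a k ≤ (b k + b (k + 1)) / 2) : ∑' k, a k ≤ ∑' k, b k := by
  have hb' : Summable fun k => b (k + 1) := (summable_nat_add_iff 1).2 hb
  have hmid : Summable fun k => (b k + b (k + 1)) / 2 := (hb.add hb').div_const 2
  calc ∑' k, a k ≤ ∑' k, (b k + b (k + 1)) / 2 :=
        (hmid.of_nonneg_of_le ha hab).tsum_le_tsum hab hmid
    _ = (∑' k, b k + ∑' k, b (k + 1)) / 2 := by rw [tsum_div_const, hb.tsum_add hb']
    _ ≤ ∑' k, b k := by linarith [hb.tsum_eq_zero_add]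

lemma mul_besselCoeff_add_one_le_midpoint {ν : ℝ} (hν : 1 ≤ ν) (t : ℝ) (k : ℕ) :
    t * besselCoeff (ν + 1) (t ^ 2) k ≤
      (besselCoeff ν (t ^ 2) k + besselCoeff ν (t ^ 2) (k + 1)) / 2 := by
  have hk : (0 : ℝ) < k + ν := by positivity
  have hb := besselCoeff_nonneg (by positivity) (sq_nonneg t) k (μ := ν)
  rw [besselCoeff_add_one hk.ne', besselCoeff_succ hk.ne']
  set b := besselCoeff ν (t ^ 2) k
  set s := t / (k + ν)
  have hs : s ^ 2 ≤ t ^ 2 / ((k + 1) * (k + ν)) := by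
    rw [div_pow]
    gcongr
    nlinarith
  calc t * (b / (k + ν)) = s * b := by ring
    _ ≤ (1 + s ^ 2) / 2 * b := by gcongr; nlinarith [sq_nonneg (s - 1)]
    _ ≤ (b + t ^ 2 / ((k + 1) * (k + ν)) * b) / 2 := by nlinarith

lemma mul_tsum_besselCoeff_add_one_le {ν t : ℝ} (hν : 1 ≤ ν) (ht : 0 ≤ t) :
    t * ∑' k, besselCoeff (ν + 1) (t ^ 2) k ≤ ∑' k, besselCoeff ν (t ^ 2) k := by
  rw [← tsum_mul_left]
  exact tsum_le_tsum_of_le_midpoint_succ (summable_besselCoeff ν _)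
    (besselCoeff_nonneg (by positivity) (sq_nonneg t) 0)
    (fun k => mul_nonneg ht (besselCoeff_nonneg (by positivity) (sq_nonneg t) k))
    (mul_besselCoeff_add_one_le_midpoint hν t)

lemma Gamma_mul_Gamma_add_half_natCast_add_one_div_two (m : ℕ) :
    Gamma ((m + 1) / 2) * Gamma ((m + 1) / 2 + 1 / 2) = m.factorial * √π / 2 ^ m := by
  rw [Gamma_mul_Gamma_add_half, mul_div_cancel₀ _ two_ne_zero, Gamma_nat_eq_factorial,
    show (1 : ℝ) - (m + 1) = -m by ring, rpow_neg zero_le_two, rpow_natCast]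
  ring

lemma besselCoeff_one_half (t : ℝ) (k : ℕ) :
    besselCoeff (1 / 2) (t ^ 2) k = (2 * t) ^ (2 * k) / (2 * k).factorial / √π := by
  have h := Gamma_mul_Gamma_add_half_natCast_add_one_div_two (2 * k)
  rw [show ((2 * k : ℕ) + 1 : ℝ) / 2 = k + 1 / 2 by push_cast; ring, add_assoc,
    add_halves, Gamma_nat_eq_factorial] at h
  rw [besselCoeff, mul_comm, h]
  field_simp
  ring

lemma mul_besselCoeff_three_halves (t : ℝ) (k : ℕ) :
    t * besselCoeff (3 / 2) (t ^ 2) k = (2 * t) ^ (2 * k + 1) / (2 * k + 1).factorial / √π := by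
  have h := Gamma_mul_Gamma_add_half_natCast_add_one_div_two (2 * k + 1)
  rw [show ((2 * k + 1 : ℕ) + 1 : ℝ) / 2 = k + 1 by push_cast; ring, Gamma_nat_eq_factorial,
    add_assoc, show (1 : ℝ) + 1 / 2 = 3 / 2 by norm_num] at h
  rw [besselCoeff, h]
  field_simp
  ring

lemma tsum_besselCoeff_one_half (t : ℝ) :
    ∑' k, besselCoeff (1 / 2) (t ^ 2) k = cosh (2 * t) / √π := by
  simp_rw [besselCoeff_one_half, tsum_div_const, cosh_eq_tsum]

lemma mul_tsum_besselCoeff_three_halves (t : ℝ) :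
    t * ∑' k, besselCoeff (3 / 2) (t ^ 2) k = sinh (2 * t) / √π := by
  simp_rw [← tsum_mul_left, mul_besselCoeff_three_halves, tsum_div_const, sinh_eq_tsum]

lemma mul_tsum_besselCoeff_three_halves_le (t : ℝ) :
    t * ∑' k, besselCoeff (3 / 2) (t ^ 2) k ≤ ∑' k, besselCoeff (1 / 2) (t ^ 2) k := by
  rw [mul_tsum_besselCoeff_three_halves, tsum_besselCoeff_one_half]
  gcongr
  exact (sinh_lt_cosh _).le

theorem besselRatio_le_one (x : ℝ) (hx : 0 ≤ x) (n : ℕ) (hn : 0 < n) :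
    besselRatio ((n : ℝ) / 2) x ≤ 1 := by
  have hν : (0 : ℝ) < n / 2 := by positivity
  rcases hx.eq_or_lt with rfl | hx
  · simp [besselRatio, besselI_zero_right hν]
  rw [besselRatio_eq hx]
  refine div_le_one_of_le₀ ?_ (tsum_nonneg (besselCoeff_nonneg hν (by positivity)))
  obtain rfl | hn := Nat.one_le_iff_ne_zero.2 hn.ne' |>.eq_or_lt
  · rw [Nat.cast_one, show (1 : ℝ) / 2 + 1 = 3 / 2 by norm_num]
    exact mul_tsum_besselCoeff_three_halves_le (x / 2)
  · have hn : (2 : ℝ) ≤ n := by exact_mod_cast hn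
    exact mul_tsum_besselCoeff_add_one_le (by linarith) (by positivity)
end

section
/- Let f(x, ω) be a strictly totally positive (positive-definite) kernel, differentiable in x, and let η(ω) be a function that changes sign at most k times. If M(x) = ∫ η(ω) f(x, ω) dω is well defined, then M changes sign at most k times (variation-diminishing property of totally positive kernels). -/
open MeasureTheory

/-- A kernel `f : ℝ × ℝ → ℝ` is strictly totally positive if it is nonnegative and all
determinants of matrices `(f (x i) (ω j))` with strictly increasing nodes are positive. -/
def StrictlyTotallyPositive (f : ℝ → ℝ → ℝ) : Prop :=
  (∀ x ω, 0 ≤ f x ω) ∧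
    ∀ (m : ℕ) (x ω : Fin m → ℝ), StrictMono x → StrictMono ω →
      0 < (Matrix.of fun i j => f (x i) (ω j)).det

/-- `g` changes sign at most `k` times: there is no strictly increasing sequence of
`k + 2` points on which consecutive values of `g` have strictly opposite signs more than
`k` times. -/
def SignChangesAtMost (g : ℝ → ℝ) (k : ℕ) : Prop :=
  ∀ (m : ℕ) (t : Fin (m + 1) → ℝ), StrictMono t →
    (∀ i : Fin m, g (t i.castSucc) * g (t i.succ) < 0) → m ≤ k

/-!
Let `I_j` be the set of points to the left of which `η` changes sign exactly `j` times. These are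
at most `k + 1` ordered intervals, on each of which `η` has a constant sign `σ j`, so
`M x = ∑ j, σ j * g j x` with `g j x = ∫_{I_j} |η| f(x, ·)`. By the basic composition formula the
kernel `(x, j) ↦ g j x`, restricted to the `p ≤ k + 1` indices with `g j ≠ 0`, inherits strict
total positivity from `f`. If `M` alternated in sign at `p + 1` points `x_s`, the column `(M x_s)`
would be a combination of the columns `(g j x_s)`, so the square matrix `[M | g]` would be
singular; yet all terms of its Laplace expansion along the first column have the same sign.
-/

open Matrix

theorem mul_neg_of_mul_pos_of_mul_neg {a b c : ℝ} (hab : 0 < a * b) (hbc : b * c < 0) :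
    a * c < 0 := by
  have hb : 0 < b * b := mul_self_pos.mpr (right_ne_zero_of_mul hab.ne')
  have : a * c * (b * b) < 0 := by
    calc a * c * (b * b) = (a * b) * (b * c) := by ring
      _ < 0 := mul_neg_of_pos_of_neg hab hbc
  exact neg_of_mul_neg_left this hb.le

theorem neg_one_pow_mul_pos_of_alternating {n : ℕ} {v : Fin (n + 1) → ℝ} (h0 : v 0 ≠ 0)
    (halt : ∀ i : Fin n, v i.castSucc * v i.succ < 0) (i : Fin (n + 1)) :
    0 < (-1) ^ (i : ℕ) * (v 0 * v i) := by
  induction i using Fin.induction with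
  | zero => simpa using mul_self_pos.mpr h0
  | succ i ih =>
    rw [Fin.val_castSucc, ← mul_assoc] at ih
    have := mul_neg_of_mul_pos_of_mul_neg ih (halt i)
    rw [Fin.val_succ, pow_succ]
    linarith

theorem Matrix.not_alternating_mulVec {p : ℕ} (K : Matrix (Fin (p + 1)) (Fin p) ℝ)
    (hK : ∀ s : Fin (p + 1), 0 < (K.submatrix s.succAbove id).det) (c : Fin p → ℝ)
    (h0 : (K *ᵥ c) 0 ≠ 0) : ¬ ∀ i : Fin p, (K *ᵥ c) i.castSucc * (K *ᵥ c) i.succ < 0 := by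
  intro halt
  set v := K *ᵥ c
  -- `[v | K]` is singular, yet every term of its Laplace expansion along `v` has the sign of `v 0`
  let B : Matrix (Fin (p + 1)) (Fin (p + 1)) ℝ := .of fun s => Fin.cons (v s) (K s)
  have hB : B.det = 0 := by
    refine exists_mulVec_eq_zero_iff.mp ⟨Fin.cons (-1) c, fun h => by simpa using congrFun h 0, ?_⟩
    ext s
    simp [B, mulVec, dotProduct, Fin.sum_univ_succ, v]
  have hlaplace :
      B.det = ∑ s : Fin (p + 1), (-1) ^ (s : ℕ) * v s * (K.submatrix s.succAbove id).det := by
    rw [det_succ_column_zero]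
    rfl
  have hpos : 0 < v 0 * B.det := by
    rw [hlaplace, Finset.mul_sum]
    refine Finset.sum_pos (fun s _ => ?_) Finset.univ_nonempty
    calc (0 : ℝ) < (-1) ^ (s : ℕ) * (v 0 * v s) * (K.submatrix s.succAbove id).det :=
          mul_pos (neg_one_pow_mul_pos_of_alternating h0 halt s) (hK s)
      _ = _ := by ring
  simp [hB] at hpos

theorem StrictlyTotallyPositive.pos {f : ℝ → ℝ → ℝ} (hf : StrictlyTotallyPositive f) (x ω : ℝ) :
    0 < f x ω := by
  simpa using hf.2 1 (fun _ => x) (fun _ => ω) (Subsingleton.strictMono _)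
    (Subsingleton.strictMono _)

theorem integrable_det_of_integrable {n : ℕ} {g : Fin n → Fin n → ℝ → ℝ}
    (hg : ∀ s l, Integrable (g s l)) :
    Integrable fun ω : Fin n → ℝ => (Matrix.of fun s l => g s l (ω l)).det := by
  simp only [Matrix.det_apply', Matrix.of_apply]
  exact integrable_finsetSum _ fun σ _ =>
    (Integrable.fintype_prod (f := fun l => g (σ l) l) fun l => hg (σ l) l).const_mul _

theorem det_integral_eq_integral_det {n : ℕ} {g : Fin n → Fin n → ℝ → ℝ}
    (hg : ∀ s l, Integrable (g s l)) :
    (Matrix.of fun s l => ∫ ω, g s l ω).det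
      = ∫ ω : Fin n → ℝ, (Matrix.of fun s l => g s l (ω l)).det := by
  simp only [Matrix.det_apply', Matrix.of_apply]
  rw [integral_finsetSum _ fun σ _ =>
    (Integrable.fintype_prod (f := fun l => g (σ l) l) fun l => hg (σ l) l).const_mul _]
  refine Finset.sum_congr rfl fun σ _ => ?_
  rw [integral_const_mul, integral_fintype_prod_volume_eq_prod (fun l => g (σ l) l)]

theorem integral_pos_of_support_subset {α : Type*} [MeasurableSpace α] {μ : Measure α}
    {g w : α → ℝ} (hg : 0 ≤ g) (hgi : Integrable g μ) (hw : ∫ a, w a ∂μ ≠ 0)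
    (hwg : Function.support w ⊆ Function.support g) : 0 < ∫ a, g a ∂μ := by
  rw [integral_pos_iff_support_of_nonneg hg hgi, pos_iff_ne_zero]
  exact fun hnull => hw (integral_eq_zero_of_ae (measure_mono_null hwg hnull))

theorem det_integral_pos {p : ℕ} {f : ℝ → ℝ → ℝ} (hf : StrictlyTotallyPositive f)
    {ψ : Fin p → ℝ → ℝ} (hψ : ∀ l, 0 ≤ ψ l)
    (hord : ∀ l l' a b, l < l' → ψ l a ≠ 0 → ψ l' b ≠ 0 → a < b)
    (hint : ∀ l y, Integrable fun ω => ψ l ω * f y ω) {z : ℝ}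
    (hz : ∀ l, 0 < ∫ ω, ψ l ω * f z ω) {y : Fin p → ℝ} (hy : StrictMono y) :
    0 < (Matrix.of fun s l => ∫ ω, ψ l ω * f (y s) ω).det := by
  rw [det_integral_eq_integral_det fun s l => hint l (y s)]
  have hfactor (ω : Fin p → ℝ) : (Matrix.of fun s l => ψ l (ω l) * f (y s) (ω l)).det
      = (∏ l, ψ l (ω l)) * (Matrix.of fun s l => f (y s) (ω l)).det :=
    Matrix.det_mul_row (fun l => ψ l (ω l)) _
  -- on the product of the supports the nodes `ω l` increase, so the minor of `f` is positive
  have hsupp (ω : Fin p → ℝ) (hω : ∏ l, ψ l (ω l) ≠ 0) :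
      0 < (Matrix.of fun s l => ψ l (ω l) * f (y s) (ω l)).det := by
    have hne := Finset.prod_ne_zero_iff.mp hω
    have hmono : StrictMono ω := fun a b hab =>
      hord a b _ _ hab (hne a (Finset.mem_univ _)) (hne b (Finset.mem_univ _))
    rw [hfactor]
    exact mul_pos (lt_of_le_of_ne (Finset.prod_nonneg fun l _ => hψ l _) (Ne.symm hω))
      (hf.2 p y ω hy hmono)
  refine integral_pos_of_support_subset (w := fun ω => ∏ l, ψ l (ω l) * f z (ω l))
    (fun ω => ?_) (integrable_det_of_integrable fun s l => hint l (y s)) ?_ ?_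
  · by_cases hω : ∏ l, ψ l (ω l) = 0
    · simp only [Pi.zero_apply, hfactor, hω, zero_mul, le_refl]
    · exact (hsupp ω hω).le
  · rw [integral_fintype_prod_volume_eq_prod (fun l ω => ψ l ω * f z ω)]
    exact (Finset.prod_pos fun l _ => hz l).ne'
  · intro ω hω
    refine (hsupp ω fun h0 => hω ?_).ne'
    obtain ⟨l, -, hl⟩ := Finset.prod_eq_zero_iff.mp h0
    exact Finset.prod_eq_zero (Finset.mem_univ l) (by simp [hl])

def IsSignAlternating (η : ℝ → ℝ) {m : ℕ} (u : Fin (m + 1) → ℝ) : Prop :=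
  StrictMono u ∧ ∀ i : Fin m, η (u i.castSucc) * η (u i.succ) < 0

namespace IsSignAlternating

variable {η : ℝ → ℝ} {m : ℕ} {u : Fin (m + 1) → ℝ}

theorem const (η : ℝ → ℝ) (c : ℝ) : IsSignAlternating η fun _ : Fin 1 => c :=
  ⟨Subsingleton.strictMono (α := Fin 1) _, fun i => i.elim0⟩

theorem snoc (hu : IsSignAlternating η u) {w : ℝ} (hw : u (Fin.last m) < w)
    (hsign : η (u (Fin.last m)) * η w < 0) :
    IsSignAlternating η (Fin.snoc u w : Fin (m + 2) → ℝ) := by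
  refine ⟨Fin.strictMono_iff_lt_succ.mpr fun i => ?_, fun i => ?_⟩ <;>
  rcases Fin.eq_castSucc_or_eq_last i with ⟨i, rfl⟩ | rfl
  · rw [Fin.succ_castSucc, Fin.snoc_castSucc, Fin.snoc_castSucc]
    exact hu.1 Fin.castSucc_lt_succ
  · simpa using hw
  · rw [Fin.succ_castSucc, Fin.snoc_castSucc, Fin.snoc_castSucc]
    exact hu.2 i
  · simpa using hsign

theorem apply_last_ne_zero (hu : IsSignAlternating η u) (hm : 0 < m) :
    η (u (Fin.last m)) ≠ 0 := by
  obtain ⟨n, rfl⟩ := Nat.exists_eq_add_of_lt hm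
  have := hu.2 (Fin.last _)
  rw [Fin.succ_last] at this
  exact right_ne_zero_of_mul this.ne

theorem comp_castLE {n : ℕ} (hu : IsSignAlternating η u) (hnm : n ≤ m) :
    IsSignAlternating η (u ∘ Fin.castLE (Nat.succ_le_succ hnm)) := by
  refine ⟨hu.1.comp (Fin.strictMono_castLE _), fun i => ?_⟩
  simpa using hu.2 (Fin.castLE hnm i)

end IsSignAlternating

-- The number of sign changes of `η` on `(-∞, c]` (junk `sSup` unless these are bounded).
noncomputable def signChangesUpTo (η : ℝ → ℝ) (c : ℝ) : ℕ :=
  sSup {m | ∃ u : Fin (m + 1) → ℝ, IsSignAlternating η u ∧ u (Fin.last m) ≤ c}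

section signChangesUpTo

variable {η : ℝ → ℝ} {k : ℕ} (hη : SignChangesAtMost η k)
include hη

theorem bddAbove_signChangesUpTo (c : ℝ) :
    BddAbove {m | ∃ u : Fin (m + 1) → ℝ, IsSignAlternating η u ∧ u (Fin.last m) ≤ c} :=
  ⟨k, fun m ⟨u, hu, _⟩ => hη m u hu.1 hu.2⟩

theorem le_signChangesUpTo {m : ℕ} {u : Fin (m + 1) → ℝ} (hu : IsSignAlternating η u) {c : ℝ}
    (hc : u (Fin.last m) ≤ c) : m ≤ signChangesUpTo η c :=
  le_csSup (bddAbove_signChangesUpTo hη c) ⟨u, hu, hc⟩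

theorem exists_isSignAlternating_signChangesUpTo (c : ℝ) :
    ∃ u : Fin (signChangesUpTo η c + 1) → ℝ,
      IsSignAlternating η u ∧ u (Fin.last _) ≤ c :=
  Nat.sSup_mem ⟨0, show ∃ u : Fin 1 → ℝ, IsSignAlternating η u ∧ u 0 ≤ c from
    ⟨_, .const η c, le_rfl⟩⟩ (bddAbove_signChangesUpTo hη c)

theorem succ_le_signChangesUpTo {m : ℕ} {u : Fin (m + 1) → ℝ} (hu : IsSignAlternating η u)
    {w : ℝ} (hw : u (Fin.last m) < w) (hsign : η (u (Fin.last m)) * η w < 0) :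
    m + 1 ≤ signChangesUpTo η w :=
  le_signChangesUpTo hη (hu.snoc hw hsign) (Fin.snoc_last (α := fun _ => ℝ) _ _).le

theorem signChangesUpTo_le (c : ℝ) : signChangesUpTo η c ≤ k :=
  let ⟨u, hu, _⟩ := exists_isSignAlternating_signChangesUpTo hη c
  hη _ u hu.1 hu.2

theorem monotone_signChangesUpTo : Monotone (signChangesUpTo η) := fun _ _ hcd =>
  let ⟨_, hu, hc⟩ := exists_isSignAlternating_signChangesUpTo hη _
  le_signChangesUpTo hη hu (hc.trans hcd)

theorem signChangesUpTo_lt {a b : ℝ} (hab : a < b) (hsign : η a * η b < 0) :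
    signChangesUpTo η a < signChangesUpTo η b := by
  obtain ⟨u, hu, hua⟩ := exists_isSignAlternating_signChangesUpTo hη a
  rcases Nat.eq_zero_or_pos (signChangesUpTo η a) with h0 | hpos
  · rw [h0]
    exact succ_le_signChangesUpTo hη (.const η a) hab hsign
  set ℓ := u (Fin.last _)
  by_cases hℓb : η ℓ * η b < 0
  · exact succ_le_signChangesUpTo hη hu (hua.trans_lt hab) hℓb
  -- otherwise the last point of the witness already changes sign against `a`
  have hℓb : 0 < η ℓ * η b := lt_of_le_of_ne (not_lt.mp hℓb)
    (mul_ne_zero (hu.apply_last_ne_zero hpos) (right_ne_zero_of_mul hsign.ne)).symm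
  have hℓa : η ℓ * η a < 0 := mul_neg_of_mul_pos_of_mul_neg hℓb (by rwa [mul_comm])
  have hlt : ℓ < a := hua.lt_of_ne fun h => by nlinarith [h ▸ hℓa, mul_self_nonneg (η a)]
  have := succ_le_signChangesUpTo hη hu hlt hℓa
  omega

theorem mul_pos_of_signChangesUpTo_eq {a b : ℝ} (heq : signChangesUpTo η a = signChangesUpTo η b)
    (ha : η a ≠ 0) (hb : η b ≠ 0) : 0 < η a * η b := by
  refine lt_of_le_of_ne (not_lt.mp fun hneg => ?_) (mul_ne_zero ha hb).symm
  rcases lt_trichotomy a b with hab | rfl | hba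
  · exact heq.not_lt (signChangesUpTo_lt hη hab hneg)
  · exact not_lt.mpr (mul_self_nonneg _) hneg
  · exact heq.not_gt (signChangesUpTo_lt hη hba (by rwa [mul_comm]))

theorem exists_eq_sign_mul_abs :
    ∃ σ : ℕ → ℝ, ∀ ω, η ω = σ (signChangesUpTo η ω) * |η ω| := by
  classical
  refine ⟨fun j => if ∃ ω, signChangesUpTo η ω = j ∧ 0 < η ω then 1 else -1, fun ω => ?_⟩
  dsimp only
  rcases lt_trichotomy (η ω) 0 with hneg | hzero | hpos
  · rw [if_neg, abs_of_neg hneg, neg_one_mul, neg_neg]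
    rintro ⟨ω', hω', hpos'⟩
    have := mul_pos_of_signChangesUpTo_eq hη hω'.symm hneg.ne hpos'.ne'
    nlinarith
  · simp [hzero]
  · rw [if_pos ⟨ω, rfl, hpos⟩, abs_of_pos hpos, one_mul]

end signChangesUpTo

theorem integral_mul_eq_zero_of_integral_mul_eq_zero {α : Type*} [MeasurableSpace α]
    {μ : Measure α} {ψ g : α → ℝ} (hψ : 0 ≤ ψ) (hg : ∀ a, 0 < g a)
    (hint : Integrable (fun a => ψ a * g a) μ) (h0 : ∫ a, ψ a * g a ∂μ = 0) (h : α → ℝ) :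
    ∫ a, ψ a * h a ∂μ = 0 := by
  have hae := (integral_eq_zero_iff_of_nonneg (fun a => mul_nonneg (hψ a) (hg a).le) hint).mp h0
  refine integral_eq_zero_of_ae (hae.mono fun a ha => ?_)
  simp only [Pi.zero_apply, mul_eq_zero, (hg a).ne', or_false] at ha ⊢
  exact Or.inl ha

theorem signChangesAtMost_sum_integral {ι : Type*} [LinearOrder ι] {f : ℝ → ℝ → ℝ}
    (hf : StrictlyTotallyPositive f) {ψ : ι → ℝ → ℝ} (hψ : ∀ i, 0 ≤ ψ i)
    (hord : ∀ i j a b, i < j → ψ i a ≠ 0 → ψ j b ≠ 0 → a < b)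
    (hint : ∀ i y, Integrable fun ω => ψ i ω * f y ω) (c : ι → ℝ) {s : Finset ι} {k : ℕ}
    (hs : s.card ≤ k + 1) :
    SignChangesAtMost (fun y => ∑ i ∈ s, c i * ∫ ω, ψ i ω * f y ω) k := by
  intro m t ht halt
  by_contra! hm
  set M := fun y => ∑ i ∈ s, c i * ∫ ω, ψ i ω * f y ω
  classical
  -- components that vanish at one point vanish everywhere, since `f > 0`
  set s' := s.filter fun i => 0 < ∫ ω, ψ i ω * f 0 ω
  have hM (y : ℝ) : M y = ∑ i ∈ s', c i * ∫ ω, ψ i ω * f y ω := by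
    refine (Finset.sum_subset (Finset.filter_subset _ _) fun i hi hi' => ?_).symm
    have h0 : ∫ ω, ψ i ω * f 0 ω = 0 :=
      le_antisymm (not_lt.mp fun h => hi' (Finset.mem_filter.mpr ⟨hi, h⟩))
        (integral_nonneg fun ω => mul_nonneg (hψ i ω) (hf.1 0 ω))
    rw [integral_mul_eq_zero_of_integral_mul_eq_zero (hψ i) (hf.pos 0) (hint i 0) h0, mul_zero]
  set p := s'.card
  have hpm : p ≤ m := (Finset.card_filter_le _ _).trans (by omega)
  set e := s'.orderEmbOfFin rfl
  set y := t ∘ Fin.castLE (Nat.succ_le_succ hpm)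
  let K : Matrix (Fin (p + 1)) (Fin p) ℝ := .of fun r l => ∫ ω, ψ (e l) ω * f (y r) ω
  have hK : K *ᵥ (c ∘ e) = M ∘ y := by
    ext r
    have := Finset.sum_map Finset.univ e.toEmbedding fun i => c i * ∫ ω, ψ i ω * f (y r) ω
    rw [Finset.map_orderEmbOfFin_univ] at this
    rw [Function.comp_apply, hM, this, mulVec, dotProduct]
    exact Finset.sum_congr rfl fun l _ => mul_comm (K r l) (c (e l))
  have hminors (r : Fin (p + 1)) : 0 < (K.submatrix r.succAbove id).det :=
    det_integral_pos hf (ψ := ψ ∘ e) (fun l => hψ (e l))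
      (fun l l' a b hl => hord _ _ a b (e.strictMono hl)) (fun l => hint (e l))
      (fun l => (Finset.mem_filter.mp (s'.orderEmbOfFin_mem rfl l)).2)
      ((ht.comp (Fin.strictMono_castLE _)).comp (Fin.strictMono_succAbove r))
  have hy := IsSignAlternating.comp_castLE (η := M) ⟨ht, halt⟩ hpm
  have h0 : (M ∘ y) 0 ≠ 0 := left_ne_zero_of_mul (halt ⟨0, by omega⟩).ne
  exact K.not_alternating_mulVec hminors (c ∘ e) (hK ▸ h0) (hK ▸ hy.2)

theorem MeasureTheory.Integrable.indicator_abs_mul {α : Type*} [MeasurableSpace α]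
    {μ : Measure α} {η g : α → ℝ} (h : Integrable (fun a => η a * g a) μ) (hg : 0 ≤ g)
    {s : Set α} (hs : MeasurableSet s) :
    Integrable (fun a => s.indicator (fun a => |η a|) a * g a) μ := by
  refine (h.indicator hs).abs.congr (ae_of_all _ fun a => ?_)
  by_cases ha : a ∈ s <;> simp [ha, abs_mul, abs_of_nonneg (hg a)]

theorem variation_diminishing_general (f : ℝ → ℝ → ℝ) (η : ℝ → ℝ) (k : ℕ)
    (hf : StrictlyTotallyPositive f)
    (hη : SignChangesAtMost η k)
    (hint : ∀ x, Integrable (fun ω => η ω * f x ω)) :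
    SignChangesAtMost (fun x => ∫ ω, η ω * f x ω) k := by
  obtain ⟨σ, hσ⟩ := exists_eq_sign_mul_abs hη
  set ψ : ℕ → ℝ → ℝ := fun j => (signChangesUpTo η ⁻¹' {j}).indicator fun ω => |η ω|
  have hψint (j : ℕ) (x : ℝ) : Integrable fun ω => ψ j ω * f x ω :=
    (hint x).indicator_abs_mul (hf.1 x)
      ((monotone_signChangesUpTo hη).measurable (measurableSet_singleton j))
  have hdecomp (x : ℝ) :
      ∫ ω, η ω * f x ω = ∑ j ∈ Finset.range (k + 1), σ j * ∫ ω, ψ j ω * f x ω := by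
    simp_rw [← integral_const_mul]
    rw [← integral_finsetSum _ fun j _ => (hψint j x).const_mul (σ j)]
    refine integral_congr_ae (ae_of_all _ fun ω => ?_)
    dsimp only
    rw [Finset.sum_eq_single_of_mem (signChangesUpTo η ω)
      (Finset.mem_range.mpr (Nat.lt_succ_of_le (signChangesUpTo_le hη ω)))]
    · simp [ψ, ← mul_assoc, ← hσ ω]
    · intro j _ hj
      simp [ψ, Ne.symm hj]
  simp_rw [hdecomp]
  refine signChangesAtMost_sum_integral hf (fun j => Set.indicator_nonneg fun _ _ => abs_nonneg _)
    (fun i j a b hij ha hb => ?_) hψint σ (by simp)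
  refine (monotone_signChangesUpTo hη).reflect_lt ?_
  rwa [Set.mem_of_indicator_ne_zero ha, Set.mem_of_indicator_ne_zero hb]

/-- Karlin's variation-diminishing theorem for strictly totally positive kernels. -/
theorem variation_diminishing (f : ℝ → ℝ → ℝ) (η : ℝ → ℝ) (k : ℕ)
    (hf : StrictlyTotallyPositive f)
    (hdiff : ∀ ω, Differentiable ℝ fun x => f x ω)
    (hη : SignChangesAtMost η k)
    (hint : ∀ x, Integrable (fun ω => η ω * f x ω)) :
    SignChangesAtMost (fun x => ∫ ω, η ω * f x ω) k :=
  variation_diminishing_general f η k hf hη hint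
end

section
/- For σ₁, σ₂ > 0 with σ₁² < σ₂², the function c ↦ ∫_{σ₁²}^{σ₂²} [ c²/((√s/2 + sqrt(s/4 + c²))²) + c²(c²+s)/((s/2 + sqrt(s²/4 + c²(c²+s)))²) − 1 ] / s² ds is continuous on [0, ∞), equals −(1/σ₁² − 1/σ₂²) < 0 at c = 0, tends to +(1/σ₁² − 1/σ₂²) > 0 as c → ∞, and hence has a zero c(σ₁², σ₂²) ∈ (0, ∞). -/
/-!
Both fractions are instances of `u / (a + √(b + u))²` with `a, b ≥ 0`, `u ≥ 0`, which lies in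
`[0, 1]` and tends to `1` as `u → ∞`. Hence the integrand is bounded by `1 / σ₁⁴` on the domain
of integration, equals `-1 / s²` at `c = 0` and tends to `1 / s²` as `c → ∞`; dominated
convergence gives continuity and both limits, and the intermediate value theorem the zero.
-/

open MeasureTheory Filter Topology Set

noncomputable section

def sqrtRatio (a b u : ℝ) : ℝ := u / (a + √(b + u)) ^ 2

lemma sqrtRatio_nonneg (a b : ℝ) {u : ℝ} (hu : 0 ≤ u) : 0 ≤ sqrtRatio a b u :=
  div_nonneg hu (sq_nonneg _)

lemma sqrtRatio_le_one {a b : ℝ} (ha : 0 ≤ a) (hb : 0 ≤ b) (u : ℝ) : sqrtRatio a b u ≤ 1 := by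
  rcases le_or_gt u 0 with hu | hu
  · exact (div_nonpos_of_nonpos_of_nonneg hu (sq_nonneg _)).trans zero_le_one
  have hsqrt : √u ≤ a + √(b + u) := by
    linarith [Real.sqrt_le_sqrt (show u ≤ b + u by linarith)]
  refine div_le_one_of_le₀ ?_ (sq_nonneg _)
  calc u = √u ^ 2 := (Real.sq_sqrt hu.le).symm
    _ ≤ (a + √(b + u)) ^ 2 := pow_le_pow_left₀ (Real.sqrt_nonneg u) hsqrt 2

lemma continuous_sqrtRatio {a : ℝ} (ha : 0 < a) (b : ℝ) : Continuous (sqrtRatio a b) :=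
  continuous_id.div (by fun_prop) fun u => by positivity

lemma tendsto_sqrtRatio_atTop (a b : ℝ) : Tendsto (sqrtRatio a b) atTop (𝓝 1) := by
  have h_a : Tendsto (fun u : ℝ => a / √u) atTop (𝓝 0) := by
    simpa [Function.comp_def, div_eq_mul_inv, Real.sqrt_inv] using
      ((Real.continuous_sqrt.tendsto 0).comp tendsto_inv_atTop_zero).const_mul a
  have h_b : Tendsto (fun u : ℝ => √(b / u + 1)) atTop (𝓝 1) := by
    have : Tendsto (fun u : ℝ => b / u + 1) atTop (𝓝 1) := by
      simpa [div_eq_mul_inv] using (tendsto_inv_atTop_zero.const_mul b).add_const 1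
    simpa [Function.comp_def] using (Real.continuous_sqrt.tendsto 1).comp this
  have h_inv : Tendsto (fun u : ℝ => ((a / √u + √(b / u + 1)) ^ 2)⁻¹) atTop (𝓝 1) := by
    simpa using ((h_a.add h_b).pow 2).inv₀ (by norm_num)
  refine h_inv.congr' ?_
  filter_upwards [eventually_gt_atTop 0, eventually_ge_atTop (-b)] with u hu hbu
  have hsqrt_u : 0 < √u := Real.sqrt_pos.2 hu
  have h_quot : √(b / u + 1) = √(b + u) / √u := by
    rw [← Real.sqrt_div (by linarith)]
    congr 1
    field_simp
  rw [sqrtRatio, h_quot, ← add_div, div_pow, Real.sq_sqrt hu.le, inv_div]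

/-- Definitionally the integrand of the theorem. -/
def radiusIntegrand (c s : ℝ) : ℝ :=
  (sqrtRatio (√s / 2) (s / 4) (c ^ 2) + sqrtRatio (s / 2) (s ^ 2 / 4) (c ^ 2 * (c ^ 2 + s)) - 1) /
    s ^ 2

lemma radiusIntegrand_zero_left (s : ℝ) : radiusIntegrand 0 s = -(s ^ 2)⁻¹ := by
  simp [radiusIntegrand, sqrtRatio, neg_div]

lemma abs_radiusIntegrand_le (c : ℝ) {s : ℝ} (hs : 0 < s) : |radiusIntegrand c s| ≤ (s ^ 2)⁻¹ := by
  have h₁ := sqrtRatio_nonneg (√s / 2) (s / 4) (sq_nonneg c)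
  have h₂ := sqrtRatio_nonneg (s / 2) (s ^ 2 / 4) (by positivity : 0 ≤ c ^ 2 * (c ^ 2 + s))
  have h₁' := sqrtRatio_le_one (by positivity : 0 ≤ √s / 2) (div_nonneg hs.le zero_le_four) (c ^ 2)
  have h₂' := sqrtRatio_le_one (div_nonneg hs.le zero_le_two) (by positivity : 0 ≤ s ^ 2 / 4)
    (c ^ 2 * (c ^ 2 + s))
  rw [radiusIntegrand, abs_div, abs_of_pos (by positivity : 0 < s ^ 2), ← one_div]
  exact div_le_div_of_nonneg_right (abs_le.2 ⟨by linarith, by linarith⟩) (by positivity)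

lemma continuous_radiusIntegrand_left {s : ℝ} (hs : 0 < s) :
    Continuous fun c => radiusIntegrand c s := by
  have h₁ := continuous_sqrtRatio (by positivity : 0 < √s / 2) (s / 4)
  have h₂ := continuous_sqrtRatio (by positivity : 0 < s / 2) (s ^ 2 / 4)
  unfold radiusIntegrand
  fun_prop

lemma tendsto_radiusIntegrand_atTop (s : ℝ) :
    Tendsto (fun c => radiusIntegrand c s) atTop (𝓝 (s ^ 2)⁻¹) := by
  have h_sq : Tendsto (fun c : ℝ => c ^ 2) atTop atTop := tendsto_pow_atTop two_ne_zero
  have h₁ := (tendsto_sqrtRatio_atTop (√s / 2) (s / 4)).comp h_sq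
  have h₂ := (tendsto_sqrtRatio_atTop (s / 2) (s ^ 2 / 4)).comp
    (h_sq.atTop_mul_atTop₀ (tendsto_atTop_add_const_right _ s h_sq))
  simpa [radiusIntegrand, one_div] using ((h₁.add h₂).sub_const 1).div_const (s ^ 2)

lemma measurable_radiusIntegrand (c : ℝ) : Measurable (radiusIntegrand c) := by
  unfold radiusIntegrand sqrtRatio
  fun_prop

lemma integral_inv_sq_Ioc {a b : ℝ} (ha : 0 < a) (hab : a ≤ b) :
    ∫ s in Ioc a b, (s ^ 2)⁻¹ = 1 / a - 1 / b := by
  have h_zero : (0 : ℝ) ∉ uIcc a b := by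
    rw [uIcc_of_le hab]
    exact fun h => absurd h.1 (not_le.2 ha)
  have h := integral_zpow (a := a) (b := b) (n := -2) (Or.inr ⟨by norm_num, h_zero⟩)
  simp only [zpow_neg, zpow_ofNat] at h
  rw [← intervalIntegral.integral_of_le hab, h]
  norm_num
  ring

section Integral

variable {a b : ℝ}

lemma ae_abs_radiusIntegrand_le (ha : 0 < a) (c : ℝ) :
    ∀ᵐ s ∂volume.restrict (Ioc a b), ‖radiusIntegrand c s‖ ≤ (a ^ 2)⁻¹ :=
  (ae_restrict_iff' measurableSet_Ioc).2 <| ae_of_all _ fun s hs =>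
    (abs_radiusIntegrand_le c (ha.trans hs.1)).trans
      (inv_anti₀ (by positivity) (pow_le_pow_left₀ ha.le hs.1.le 2))

lemma continuous_integral_radiusIntegrand (ha : 0 < a) :
    Continuous fun c => ∫ s in Ioc a b, radiusIntegrand c s :=
  continuous_of_dominated (fun c => (measurable_radiusIntegrand c).aestronglyMeasurable)
    (ae_abs_radiusIntegrand_le ha) (integrableOn_const measure_Ioc_lt_top.ne)
    ((ae_restrict_iff' measurableSet_Ioc).2 <| ae_of_all _ fun _ hs =>
      continuous_radiusIntegrand_left (ha.trans hs.1))

lemma integral_radiusIntegrand_zero_left (ha : 0 < a) (hab : a ≤ b) :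
    ∫ s in Ioc a b, radiusIntegrand 0 s = -(1 / a - 1 / b) := by
  simp only [radiusIntegrand_zero_left, integral_neg, integral_inv_sq_Ioc ha hab]

lemma tendsto_integral_radiusIntegrand_atTop (ha : 0 < a) (hab : a ≤ b) :
    Tendsto (fun c => ∫ s in Ioc a b, radiusIntegrand c s) atTop (𝓝 (1 / a - 1 / b)) := by
  rw [← integral_inv_sq_Ioc ha hab]
  exact tendsto_integral_filter_of_dominated_convergence _
    (Eventually.of_forall fun c => (measurable_radiusIntegrand c).aestronglyMeasurable)
    (Eventually.of_forall (ae_abs_radiusIntegrand_le ha))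
    (integrableOn_const measure_Ioc_lt_top.ne) (ae_of_all _ tendsto_radiusIntegrand_atTop)

end Integral

lemma exists_gt_eq_of_tendsto_atTop {f : ℝ → ℝ} {a y L : ℝ} (hf : ContinuousOn f (Ici a))
    (hfa : f a < y) (hlim : Tendsto f atTop (𝓝 L)) (hyL : y < L) : ∃ c, a < c ∧ f c = y := by
  obtain ⟨b, hyb, hab⟩ :=
    ((hlim.eventually (eventually_gt_nhds hyL)).and (eventually_ge_atTop a)).exists
  obtain ⟨c, hc, hfc⟩ := intermediate_value_Ioc hab (hf.mono Icc_subset_Ici_self) ⟨hfa, hyb.le⟩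
  exact ⟨c, hc.1, hfc⟩

end

theorem asymptotic_radius_equation_has_zero (σ₁ σ₂ : ℝ) (hσ₁ : 0 < σ₁)
    (hσ : σ₁ ^ 2 < σ₂ ^ 2) (g : ℝ → ℝ)
    (hg : ∀ c : ℝ, g c = ∫ s in Set.Ioc (σ₁ ^ 2) (σ₂ ^ 2),
        (c ^ 2 / (Real.sqrt s / 2 + Real.sqrt (s / 4 + c ^ 2)) ^ 2 +
          c ^ 2 * (c ^ 2 + s) /
            (s / 2 + Real.sqrt (s ^ 2 / 4 + c ^ 2 * (c ^ 2 + s))) ^ 2 - 1) / s ^ 2) :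
    ContinuousOn g (Set.Ici 0) ∧
    g 0 = -(1 / σ₁ ^ 2 - 1 / σ₂ ^ 2) ∧
    -(1 / σ₁ ^ 2 - 1 / σ₂ ^ 2) < 0 ∧
    Tendsto g atTop (nhds (1 / σ₁ ^ 2 - 1 / σ₂ ^ 2)) ∧
    0 < 1 / σ₁ ^ 2 - 1 / σ₂ ^ 2 ∧
    ∃ c : ℝ, 0 < c ∧ g c = 0 := by
  have ha : 0 < σ₁ ^ 2 := by positivity
  have hg' : g = fun c => ∫ s in Ioc (σ₁ ^ 2) (σ₂ ^ 2), radiusIntegrand c s := funext hg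
  have h_cont : ContinuousOn g (Ici 0) :=
    hg' ▸ (continuous_integral_radiusIntegrand ha).continuousOn
  have h_zero : g 0 = -(1 / σ₁ ^ 2 - 1 / σ₂ ^ 2) :=
    hg' ▸ integral_radiusIntegrand_zero_left ha hσ.le
  have h_lim : Tendsto g atTop (𝓝 (1 / σ₁ ^ 2 - 1 / σ₂ ^ 2)) :=
    hg' ▸ tendsto_integral_radiusIntegrand_atTop ha hσ.le
  have h_pos : 0 < 1 / σ₁ ^ 2 - 1 / σ₂ ^ 2 := sub_pos.2 (one_div_lt_one_div_of_lt ha hσ)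
  exact ⟨h_cont, h_zero, neg_neg_of_pos h_pos, h_lim, h_pos,
    exists_gt_eq_of_tendsto_atTop h_cont (h_zero ▸ neg_neg_of_pos h_pos) h_lim h_pos⟩
end
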